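/- If nonempty subsets S, T, U of a finite group G fulfill the TPP, then |S| + |T| + |U| ≤ |G| + 2. -/

import Mathlib

/-!
Translating `S` by `s⁻¹` for some `s ∈ S` embeds it into `Q S`, so it suffices to bound
`|Q S| + |Q T| + |Q U|`. The sets `Q X` contain `1` and are closed under inversion, so
`g ∈ Q S ∩ Q T` gives `g * g⁻¹ * 1 = 1` with `g ∈ Q S`, `g⁻¹ ∈ Q T`, `1 ∈ Q U`, and the TPP forces
`g = 1`. As the TPP is invariant under cyclic rotation, the three sets `Q S`, `Q T`, `Q U` pairwise
meet only in `1`, which leaves room for at most `|G| + 2` elements in total.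
-/

variable {G : Type*} [Group G]

def Q (X : Set G) : Set G := {g | ∃ x ∈ X, ∃ y ∈ X, g = x * y⁻¹}

def TPP (S T U : Set G) : Prop :=
  ∀ s ∈ Q S, ∀ t ∈ Q T, ∀ u ∈ Q U, (s * t * u = 1 ↔ s = 1 ∧ t = 1 ∧ u = 1)

theorem Set.ncard_add_ncard_add_ncard_le_of_inter_subset_singleton {α : Type*} [Finite α]
    {A B C : Set α} (a : α) (hAB : A ∩ B ⊆ {a}) (hBC : B ∩ C ⊆ {a}) (hCA : C ∩ A ⊆ {a}) :
    A.ncard + B.ncard + C.ncard ≤ Nat.card α + 2 := by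
  have hABC : (A ∪ B) ∩ C ⊆ {a} := by
    rw [Set.union_inter_distrib_right, Set.inter_comm A C]
    exact Set.union_subset hCA hBC
  have le_one {X : Set α} (hX : X ⊆ {a}) : X.ncard ≤ 1 :=
    (Set.ncard_le_ncard hX).trans (Set.ncard_singleton a).le
  calc A.ncard + B.ncard + C.ncard
      = (A ∪ B ∪ C).ncard + ((A ∪ B) ∩ C).ncard + (A ∩ B).ncard := by
        rw [Set.ncard_union_add_ncard_inter, ← Set.ncard_union_add_ncard_inter A B]; ring
    _ ≤ Nat.card α + 1 + 1 :=
        add_le_add (add_le_add (Set.ncard_le_card _) (le_one hABC)) (le_one hAB)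

section Q

variable {X : Set G} {g : G}

theorem one_mem_Q (hX : X.Nonempty) : (1 : G) ∈ Q X :=
  let ⟨x, hx⟩ := hX
  ⟨x, hx, x, hx, (mul_inv_cancel x).symm⟩

theorem inv_mem_Q (hg : g ∈ Q X) : g⁻¹ ∈ Q X := by
  obtain ⟨x, hx, y, hy, rfl⟩ := hg
  exact ⟨y, hy, x, hx, by group⟩

theorem ncard_le_ncard_Q [Finite G] (hX : X.Nonempty) : X.ncard ≤ (Q X).ncard := by
  obtain ⟨x₀, hx₀⟩ := hX
  rw [← Set.ncard_image_of_injective X (mul_left_injective x₀⁻¹)]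
  refine Set.ncard_le_ncard ?_
  rintro _ ⟨x, hx, rfl⟩
  exact ⟨x, hx, x₀, hx₀, rfl⟩

end Q

namespace TPP

variable {S T U : Set G}

theorem rotate (h : TPP S T U) : TPP T U S := by
  intro t ht u hu s hs
  have hconj : t * u * s = 1 ↔ s * t * u = 1 := by rw [mul_eq_one_comm, ← mul_assoc]
  rw [hconj, h s hs t ht u hu]
  tauto

theorem Q_inter_Q_subset_one (h : TPP S T U) (hU : U.Nonempty) : Q S ∩ Q T ⊆ {1} := by
  rintro g ⟨hgS, hgT⟩
  exact ((h g hgS g⁻¹ (inv_mem_Q hgT) 1 (one_mem_Q hU)).mp (by group)).1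

end TPP

theorem sum_card_le [Finite G] (S T U : Set G) (hS : S.Nonempty) (hT : T.Nonempty)
    (hU : U.Nonempty) (h : TPP S T U) :
    S.ncard + T.ncard + U.ncard ≤ Nat.card G + 2 := by
  have hQ : (Q S).ncard + (Q T).ncard + (Q U).ncard ≤ Nat.card G + 2 :=
    Set.ncard_add_ncard_add_ncard_le_of_inter_subset_singleton 1
      (h.Q_inter_Q_subset_one hU) (h.rotate.Q_inter_Q_subset_one hS)
      (h.rotate.rotate.Q_inter_Q_subset_one hT)
  exact le_trans (add_le_add (add_le_add (ncard_le_ncard_Q hS) (ncard_le_ncard_Q hT))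
    (ncard_le_ncard_Q hU)) hQ
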